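/- If G is a strongly 2-monophonic graph, then for every vertex x of G, the closed neighborhood N[x] is not a cut set of G (its removal does not disconnect G). -/

import Mathlib

open SimpleGraph

variable {V : Type*}

/-- A walk is an induced path if it is a path and every edge of the graph between
vertices of the walk is an edge of the walk. -/
def IsInducedPath (G : SimpleGraph V) {u v : V} (p : G.Walk u v) : Prop :=
  p.IsPath ∧ ∀ a b : V, a ∈ p.support → b ∈ p.support → G.Adj a b → p.toSubgraph.Adj a b

/-- The monophonic interval: all vertices lying on some induced `u,v`-path. -/
def monoInterval (G : SimpleGraph V) (u v : V) : Set V :=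
  {w | ∃ p : G.Walk u v, IsInducedPath G p ∧ w ∈ p.support}

/-- A set `S` is monophonic if every vertex lies in the monophonic interval
of some pair of vertices of `S`. -/
def IsMonophonicSet (G : SimpleGraph V) (S : Set V) : Prop :=
  ∀ w : V, ∃ x ∈ S, ∃ y ∈ S, w ∈ monoInterval G x y

/-- The monophonic number: least cardinality of a monophonic set. -/
noncomputable def monophonicNumber (G : SimpleGraph V) : ℕ :=
  sInf {n : ℕ | ∃ S : Finset V, S.card = n ∧ IsMonophonicSet G (S : Set V)}

/-- A graph is strongly 2-monophonic if every pair of non-adjacent vertices is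
a monophonic set. -/
def Strongly2Monophonic (G : SimpleGraph V) : Prop :=
  ∀ x y : V, x ≠ y → ¬ G.Adj x y → IsMonophonicSet G {x, y}

/-- A closed walk is an induced cycle if it is a cycle and every edge of the graph
between vertices of the walk is an edge of the walk. -/
def IsInducedCycle (G : SimpleGraph V) {a : V} (w : G.Walk a a) : Prop :=
  w.IsCycle ∧ ∀ u v : V, u ∈ w.support → v ∈ w.support → G.Adj u v → w.toSubgraph.Adj u v

/-- The Kneser graph `K(n,r)`: vertices are `r`-subsets of `[n]`, adjacent iff disjoint. -/
def kneser (n r : ℕ) : SimpleGraph {s : Finset (Fin n) // s.card = r} where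
  Adj a b := a ≠ b ∧ Disjoint a.1 b.1
  symm := ⟨fun _ _ h => ⟨h.1.symm, h.2.symm⟩⟩
  loopless := ⟨fun _ h => h.1 rfl⟩

/-- The Johnson graph `J(n,r)`: vertices are `r`-subsets of `[n]`, adjacent iff the
intersection has `r-1` elements. -/
def johnson (n r : ℕ) : SimpleGraph {s : Finset (Fin n) // s.card = r} where
  Adj a b := a ≠ b ∧ (a.1 ∩ b.1).card = r - 1
  symm := ⟨fun _ _ h => ⟨h.1.symm, by rw [Finset.inter_comm]; exact h.2⟩⟩
  loopless := ⟨fun _ h => h.1 rfl⟩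

/-!
For `u, v ∉ N[x]`, the non-adjacent pair `{x, u}` is monophonic, so `v` lies on an induced
`x,u`-path. On an induced path the only vertex adjacent to `x` is the second one, which comes
before `v`; hence the segment of the path from `v` to `u` avoids `N[x]`.
-/

namespace SimpleGraph

variable {G : SimpleGraph V} {u v w x : V}

lemma Walk.IsPath.eq_of_mem_support_takeUntil_of_mem_support_dropUntil [DecidableEq V]
    {p : G.Walk u v} (hp : p.IsPath) (hw : w ∈ p.support) {y : V}
    (hy₁ : y ∈ (p.takeUntil w hw).support) (hy₂ : y ∈ (p.dropUntil w hw).support) :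
    y = w := by
  have hnodup := hp.support_nodup
  rw [← p.take_spec hw, Walk.support_append] at hnodup
  rw [← Walk.cons_tail_support, List.mem_cons] at hy₂
  exact hy₂.resolve_right (List.disjoint_of_nodup_append hnodup hy₁)

lemma IsInducedPath.reverse {p : G.Walk u v} (hp : IsInducedPath G p) :
    IsInducedPath G p.reverse := by
  refine ⟨hp.1.reverse, fun a b ha hb hab => ?_⟩
  rw [Walk.support_reverse, List.mem_reverse] at ha hb
  rw [Walk.toSubgraph_reverse]
  exact hp.2 a b ha hb hab

lemma monoInterval_comm (u v : V) : monoInterval G u v = monoInterval G v u := by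
  suffices ∀ u v, monoInterval G u v ⊆ monoInterval G v u from (this u v).antisymm (this v u)
  rintro u v w ⟨p, hp, hw⟩
  exact ⟨p.reverse, hp.reverse, by rwa [Walk.support_reverse, List.mem_reverse]⟩

lemma eq_of_mem_monoInterval_self (hw : w ∈ monoInterval G u u) : w = u := by
  obtain ⟨p, hp, hw⟩ := hw
  rw [Walk.nil_iff_support_eq.mp (Walk.isPath_iff_nil.mp hp.1)] at hw
  exact List.mem_singleton.mp hw

lemma mem_compl_neighborSet_union_singleton :
    w ∈ (G.neighborSet x ∪ {x})ᶜ ↔ w ≠ x ∧ ¬G.Adj x w := by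
  simp [not_or]

lemma IsInducedPath.support_dropUntil_subset_compl [DecidableEq V] {p : G.Walk x u}
    (hp : IsInducedPath G p) (hv : v ∈ p.support) (hvx : v ∈ (G.neighborSet x ∪ {x})ᶜ) :
    ∀ w ∈ (p.dropUntil v hv).support, w ∈ (G.neighborSet x ∪ {x})ᶜ := by
  rw [mem_compl_neighborSet_union_singleton] at hvx
  intro w hw
  have hw_eq := hp.1.eq_of_mem_support_takeUntil_of_mem_support_dropUntil hv (y := w)
  refine mem_compl_neighborSet_union_singleton.mpr ⟨fun hwx => ?_, fun hxw => ?_⟩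
  · subst hwx
    exact hvx.1 (hw_eq (Walk.start_mem_support _) hw).symm
  · have hsnd : p.snd = w :=
      hp.1.snd_of_toSubgraph_adj <|
        hp.2 x w p.start_mem_support (p.support_dropUntil_subset_support hv hw) hxw
    have hw_take : w ∈ (p.takeUntil v hv).support := by
      rw [← hsnd, ← Walk.snd_takeUntil hvx.1 p hv]
      exact Walk.getVert_mem_support _ 1
    exact hvx.2 (hw_eq hw_take hw ▸ hxw)

lemma reachable_induce_compl_of_mem_monoInterval (hu : u ∈ (G.neighborSet x ∪ {x})ᶜ)
    (hv : v ∈ (G.neighborSet x ∪ {x})ᶜ) (hvu : v ∈ monoInterval G x u) :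
    (G.induce (G.neighborSet x ∪ {x})ᶜ).Reachable ⟨u, hu⟩ ⟨v, hv⟩ := by
  classical
  obtain ⟨p, hp, hvp⟩ := hvu
  exact ((p.dropUntil v hvp).induce _ (hp.support_dropUntil_subset_compl hvp hv)).reachable.symm

end SimpleGraph

theorem stmt9 {V : Type*} (G : SimpleGraph V) (h : Strongly2Monophonic G) :
    ∀ x : V, (G.induce ((G.neighborSet x ∪ {x})ᶜ)).Preconnected := by
  rintro x ⟨u, hu⟩ ⟨v, hv⟩
  obtain ⟨hux, hxu⟩ := mem_compl_neighborSet_union_singleton.mp hu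
  obtain ⟨hvx, -⟩ := mem_compl_neighborSet_union_singleton.mp hv
  obtain ⟨a, ha, b, hb, hvab⟩ := h x u hux.symm hxu v
  rcases ha with rfl | rfl <;> rcases hb with rfl | rfl
  · exact absurd (eq_of_mem_monoInterval_self hvab) hvx
  · exact reachable_induce_compl_of_mem_monoInterval hu hv hvab
  · rw [monoInterval_comm] at hvab
    exact reachable_induce_compl_of_mem_monoInterval hu hv hvab
  · obtain rfl := eq_of_mem_monoInterval_self hvab
    rfl
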